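/- arXiv:0707.1052 — 4 statements merged into one kernel-verified Lean document; each statement's English description precedes it below -/
import Mathlib

section
/- For a unimodal polynomial f(q) with nonnegative coefficients and a positive integer l, the product [l]·f(q) is unimodal, where [l] = 1 + q + q² + ... + q^{l-1}. -/
open Polynomial

/-- A polynomial is unimodal if its coefficient sequence weakly increases
up to some index `m` and weakly decreases afterwards. -/
def PolyUnimodal (f : Polynomial ℝ) : Prop :=
  ∃ m : ℕ, (∀ i, i < m → f.coeff i ≤ f.coeff (i + 1)) ∧
    (∀ i, m ≤ i → f.coeff (i + 1) ≤ f.coeff i)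

/-- The q-analogue `[l] = 1 + q + ⋯ + q^(l-1)`. -/
noncomputable def qInt (l : ℕ) : Polynomial ℝ := ∑ i ∈ Finset.range l, X ^ i

theorem qint_mul_unimodal (f : Polynomial ℝ) (l : ℕ) (hl : 0 < l)
    (hnonneg : ∀ i, 0 ≤ f.coeff i) (hf : PolyUnimodal f) :
    PolyUnimodal (qInt l * f) := by
  obtain ⟨l', rfl⟩ : ∃ l', l = l' + 1 := ⟨l - 1, (Nat.succ_pred_eq_of_pos hl).symm⟩
  obtain ⟨m, hup, hdown⟩ := hf
  -- monotone chains
  have huc : ∀ a b, a ≤ b → b ≤ m → f.coeff a ≤ f.coeff b := by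
    intro a b hab hbm
    induction b, hab using Nat.le_induction with
    | base => exact le_refl _
    | succ b hab ih => exact le_trans (ih (by omega)) (hup b (by omega))
  have hdc : ∀ a b, m ≤ a → a ≤ b → f.coeff b ≤ f.coeff a := by
    intro a b hma hab
    induction b, hab using Nat.le_induction with
    | base => exact le_refl _
    | succ b hab ih => exact le_trans (hdown b (by omega)) ih
  -- coefficient formula
  have hg : ∀ n, (qInt (l' + 1) * f).coeff n =
      ∑ i ∈ Finset.range (l' + 1), (if i ≤ n then f.coeff (n - i) else 0) := by
    intro n
    rw [qInt, Finset.sum_mul, Polynomial.finset_sum_coeff]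
    refine Finset.sum_congr rfl fun i _ => ?_
    rw [mul_comm, Polynomial.coeff_mul_X_pow']
  -- difference formula
  have hdiff : ∀ n, (qInt (l' + 1) * f).coeff (n + 1) =
      (qInt (l' + 1) * f).coeff n + f.coeff (n + 1)
        - (if l' ≤ n then f.coeff (n - l') else 0) := by
    intro n
    rw [hg, hg, Finset.sum_range_succ' _ l', Finset.sum_range_succ]
    simp only [Nat.succ_sub_succ, Nat.add_le_add_iff_right, Nat.zero_le, if_true,
      Nat.sub_zero]
    ring
  -- propagation step
  have step : ∀ k, l' + 1 ≤ k → m < k → f.coeff k ≤ f.coeff (k - (l' + 1)) →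
      f.coeff (k + 1) ≤ f.coeff (k + 1 - (l' + 1)) := by
    intro k hlk hmk hck
    have hj1 : k + 1 - (l' + 1) = (k - (l' + 1)) + 1 := by omega
    rw [hj1]
    by_cases hjm : k - (l' + 1) < m
    · calc f.coeff (k + 1) ≤ f.coeff k := hdown k (by omega)
        _ ≤ f.coeff (k - (l' + 1)) := hck
        _ ≤ f.coeff (k - (l' + 1) + 1) := hup _ hjm
    · exact hdc (k - (l' + 1) + 1) (k + 1) (by omega) (by omega)
  by_cases hS : ∃ n, f.coeff (n + 1) < (if l' ≤ n then f.coeff (n - l') else 0)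
  · -- there is a strict decrease; take the first one
    classical
    set m' := Nat.find hS with hm'
    have hspec := Nat.find_spec hS
    have hlm' : l' ≤ m' := by
      by_contra h
      rw [if_neg h] at hspec
      exact absurd (hnonneg (m' + 1)) (not_le.mpr hspec)
    rw [if_pos hlm'] at hspec
    have hmm' : m < m' + 1 := by
      by_contra h
      push_neg at h
      exact absurd (huc (m' - l') (m' + 1) (by omega) h) (not_le.mpr hspec)
    -- invariant for all k ≥ m' + 1
    have inv : ∀ k, m' + 1 ≤ k → f.coeff k ≤ f.coeff (k - (l' + 1)) := by
      intro k hk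
      induction k, hk using Nat.le_induction with
      | base =>
        have : m' + 1 - (l' + 1) = m' - l' := by omega
        rw [this]; exact le_of_lt hspec
      | succ k hk ih => exact step k (by omega) (by omega) ih
    refine ⟨m', fun i hi => ?_, fun i hi => ?_⟩
    · have hni := Nat.find_min hS hi
      push_neg at hni
      rw [hdiff i]
      have : 0 ≤ f.coeff (i + 1) - (if l' ≤ i then f.coeff (i - l') else 0) := by
        linarith
      linarith
    · rw [hdiff i]
      have hli : l' ≤ i := le_trans hlm' hi
      rw [if_pos hli]
      have h1 := inv (i + 1) (by omega)
      have h2 : i + 1 - (l' + 1) = i - l' := by omega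
      rw [h2] at h1
      linarith
  · -- no strict decrease anywhere: the sequence is nondecreasing, eventually 0
    push_neg at hS
    refine ⟨(qInt (l' + 1) * f).natDegree + 1, fun i _ => ?_, fun i hi => ?_⟩
    · rw [hdiff i]
      have := hS i
      linarith
    · have h1 : (qInt (l' + 1) * f).coeff (i + 1) = 0 :=
        Polynomial.coeff_eq_zero_of_natDegree_lt (by omega)
      have h2 : (qInt (l' + 1) * f).coeff i = 0 :=
        Polynomial.coeff_eq_zero_of_natDegree_lt (by omega)
      rw [h1, h2]
end

section
/- For all positive integers k and l, the sequence c^{k,l}(0), c^{k,l}(1), ..., c^{k,l}(kl) is unimodal, where c^{k,l}(n) is the number of compositions of n with at most k parts each of size at most l. -/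
/-- `compCount k l n` is the number of compositions of `n` with at most `k`
parts, each part between `1` and `l`. -/
noncomputable def compCount (k l n : ℕ) : ℕ :=
  Nat.card {c : List ℕ // c.length ≤ k ∧ (∀ x ∈ c, 1 ≤ x ∧ x ≤ l) ∧ c.sum = n}

/-!
Extend the count `c_k(m)` by `0` to negative `m`. Removing the first part of a composition gives
`c_{k+1}(m) = ∑_{i=1}^{l} c_k(m - i)` for `m ≠ 0`, while `c_{k+1}(0) = 1 = c_{k+1}(1)`. So by
induction on `k` it suffices that sliding sums of length `l` preserve unimodality. The increments
of the sliding sum are the sliding sums of the increments `d`, and if `d` is never positive after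
being negative, the same holds for its sliding sum: once that sum is negative, each further step
either drops a nonnegative term while adding a nonpositive one, or the whole window already lies
where `d ≤ 0`.
-/

open Finset fwdDiff

-- The mode is left implicit: it is the first point where `f` strictly decreases.
def IsUnimodal {β : Type*} [Preorder β] (f : ℤ → β) : Prop :=
  ∀ ⦃m n : ℤ⦄, m ≤ n → f (m + 1) < f m → f (n + 1) ≤ f n

namespace IsUnimodal

variable {β : Type*} [LinearOrder β] {f g : ℤ → β}

lemma of_le_of_ge (a : ℤ) (hinc : ∀ p < a, f p ≤ f (p + 1)) (hdec : ∀ p ≥ a, f (p + 1) ≤ f p) :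
    IsUnimodal f :=
  fun m n hmn hm => hdec n (hmn.trans' (not_lt.1 fun h => (hinc m h).not_gt hm))

lemma congr_of_ge (hg : IsUnimodal g) (a : ℤ) (hinc : ∀ p < a, f p ≤ f (p + 1))
    (heq : ∀ p ≥ a, f p = g p) : IsUnimodal f := by
  intro m n hmn hm
  have ha : a ≤ m := not_lt.1 fun h => (hinc m h).not_gt hm
  rw [heq m ha, heq (m + 1) (by omega)] at hm
  rw [heq n (by omega), heq (n + 1) (by omega)]
  exact hg hmn hm

end IsUnimodal

lemma exists_mode_le {β : Type*} [LinearOrder β] {f : ℕ → β}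
    (hf : ∀ ⦃m n : ℕ⦄, m ≤ n → f (m + 1) < f m → f (n + 1) ≤ f n) (N : ℕ) :
    ∃ m ≤ N, (∀ i < m, f i ≤ f (i + 1)) ∧ (∀ i, m ≤ i → i < N → f (i + 1) ≤ f i) := by
  classical
  by_cases h : ∃ i < N, f (i + 1) < f i
  · refine ⟨Nat.find h, (Nat.find_spec h).1.le, fun i hi => ?_,
      fun i hi _ => hf hi (Nat.find_spec h).2⟩
    exact not_lt.1 fun hlt => Nat.find_min h hi ⟨hi.trans (Nat.find_spec h).1, hlt⟩
  · push Not at h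
    exact ⟨N, le_rfl, h, fun i hi hi' => absurd hi' (not_lt.2 hi)⟩

section PrevSum

variable {α : Type*} [AddCommGroup α]

def prevSum (l : ℕ) (f : ℤ → α) (m : ℤ) : α := ∑ i ∈ range l, f (m - i - 1)

lemma prevSum_add_one (l : ℕ) (f : ℤ → α) (m : ℤ) :
    prevSum l f (m + 1) = prevSum l f m + (f m - f (m - l)) := by
  have htelescope := sum_range_sub' (fun i : ℕ => f (m - i)) l
  simp only [Nat.cast_zero, sub_zero] at htelescope
  rw [← sub_eq_iff_eq_add', ← htelescope, prevSum, prevSum, ← sum_sub_distrib]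
  refine sum_congr rfl fun i _ => ?_
  push_cast
  ring_nf

lemma fwdDiff_prevSum (l : ℕ) (f : ℤ → α) : Δ_[1] (prevSum l f) = prevSum l (Δ_[1] f) := by
  ext m
  simp only [fwdDiff, prevSum, ← sum_sub_distrib]
  refine sum_congr rfl fun i _ => ?_
  ring_nf

variable [LinearOrder α] [IsOrderedAddMonoid α]

lemma prevSum_nonpos_of_neg {l : ℕ} {d : ℤ → α}
    (hd : ∀ ⦃m n : ℤ⦄, m ≤ n → d m < 0 → d n ≤ 0) {m n : ℤ} (hmn : m ≤ n)
    (hm : prevSum l d m < 0) : prevSum l d n ≤ 0 := by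
  obtain ⟨i, hi, hdi⟩ : ∃ i ∈ range l, d (m - i - 1) < 0 :=
    exists_lt_of_sum_lt (by simpa [prevSum] using hm)
  induction n, hmn using Int.leInduction with
  | base => exact hm.le
  | succ n hmn ih =>
    rcases lt_or_ge (d (n - l)) 0 with hneg | hnonneg
    · exact sum_nonpos fun j hj => hd (by have := mem_range.1 hj; omega) hneg
    · have hdn : d n ≤ 0 := hd (by have := mem_range.1 hi; omega) hdi
      rw [prevSum_add_one]
      exact add_nonpos ih (sub_nonpos_of_le (hdn.trans hnonneg))

lemma IsUnimodal.prevSum {f : ℤ → α} (hf : IsUnimodal f) (l : ℕ) :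
    IsUnimodal (prevSum l f) := by
  intro m n hmn hm
  rw [← sub_neg, ← fwdDiff, fwdDiff_prevSum] at hm
  rw [← sub_nonpos, ← fwdDiff, fwdDiff_prevSum]
  exact prevSum_nonpos_of_neg (fun a b hab ha => sub_nonpos.2 (hf hab (sub_neg.1 ha))) hmn hm

end PrevSum

abbrev BoundedComposition (k l : ℕ) (m : ℤ) : Type :=
  {c : List ℕ // c.length ≤ k ∧ (∀ x ∈ c, 1 ≤ x ∧ x ≤ l) ∧ (c.sum : ℤ) = m}

namespace BoundedComposition

variable {k l : ℕ}

instance : Unique (BoundedComposition k l 0) where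
  default := ⟨[], by simp⟩
  uniq := fun ⟨c, _, hc, hsum⟩ => by
    have hzero : ∀ x ∈ c, x = 0 := List.sum_eq_zero_iff.1 (by exact_mod_cast hsum)
    exact Subtype.ext (List.eq_nil_iff_forall_not_mem.2 fun x hx => by
      have := (hc x hx).1; have := hzero x hx; omega)

lemma isEmpty_of_neg {m : ℤ} (hm : m < 0) : IsEmpty (BoundedComposition k l m) :=
  ⟨fun ⟨c, _, _, hsum⟩ => by omega⟩

lemma isEmpty_zero_left {m : ℤ} (hm : m ≠ 0) : IsEmpty (BoundedComposition 0 l m) :=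
  ⟨fun ⟨c, hlen, _, hsum⟩ => by simp_all⟩

def cons {m : ℤ} (c : Σ i : Fin l, BoundedComposition k l (m - i - 1)) :
    BoundedComposition (k + 1) l m :=
  ⟨(c.1 + 1 : ℕ) :: c.2.1, by
    obtain ⟨i, c, hlen, hc, hsum⟩ := c
    refine ⟨by simpa using hlen, ?_, ?_⟩
    · simp only [List.mem_cons, forall_eq_or_imp]
      exact ⟨⟨by omega, by omega⟩, hc⟩
    · push_cast [List.sum_cons, hsum]; ring⟩

lemma cons_bijective {m : ℤ} (hm : m ≠ 0) :
    Function.Bijective (cons : (Σ i : Fin l, BoundedComposition k l (m - i - 1)) → _) := by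
  constructor
  · rintro ⟨i, c⟩ ⟨j, d⟩ h
    simp only [cons, Subtype.mk.injEq, List.cons.injEq] at h
    exact Sigma.subtype_ext (Fin.ext (by simpa using h.1) : i = j) h.2
  · rintro ⟨_ | ⟨a, c⟩, hlen, hc, hsum⟩
    · simp only [List.sum_nil, Nat.cast_zero] at hsum; exact absurd hsum.symm hm
    · have ha := hc a (by simp)
      refine ⟨⟨⟨a - 1, by omega⟩, ⟨c, by simpa using hlen, fun x hx => hc x (by simp [hx]), ?_⟩⟩, ?_⟩
      · simp only [List.sum_cons, Nat.cast_add] at hsum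
        simp only
        omega
      · simp only [cons, Subtype.mk.injEq, List.cons.injEq, and_true]; omega

instance finite : ∀ k (m : ℤ), Finite (BoundedComposition k l m)
  | 0, m => by
    rcases eq_or_ne m 0 with rfl | hm
    · infer_instance
    · have := isEmpty_zero_left (l := l) hm; infer_instance
  | k + 1, m => by
    rcases eq_or_ne m 0 with rfl | hm
    · infer_instance
    · have := fun m => finite k m
      exact Finite.of_surjective cons (cons_bijective hm).2

end BoundedComposition

noncomputable def boundedCompCount (k l : ℕ) (m : ℤ) : ℤ := Nat.card (BoundedComposition k l m)

section boundedCompCount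

variable {k l : ℕ}

lemma boundedCompCount_zero_right : boundedCompCount k l 0 = 1 := by simp [boundedCompCount]

lemma boundedCompCount_of_neg {m : ℤ} (hm : m < 0) : boundedCompCount k l m = 0 := by
  have := BoundedComposition.isEmpty_of_neg (k := k) (l := l) hm
  simp [boundedCompCount]

lemma boundedCompCount_zero_left {m : ℤ} (hm : m ≠ 0) : boundedCompCount 0 l m = 0 := by
  have := BoundedComposition.isEmpty_zero_left (l := l) hm
  simp [boundedCompCount]

lemma boundedCompCount_succ {m : ℤ} (hm : m ≠ 0) :
    boundedCompCount (k + 1) l m = prevSum l (boundedCompCount k l) m := by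
  rw [boundedCompCount, ← Nat.card_eq_of_bijective _ (BoundedComposition.cons_bijective hm),
    Nat.card_sigma, prevSum, ← Fin.sum_univ_eq_sum_range]
  push_cast
  rfl

lemma boundedCompCount_nonneg (m : ℤ) : 0 ≤ boundedCompCount k l m := Nat.cast_nonneg _

lemma isUnimodal_boundedCompCount (hl : 0 < l) : ∀ k, IsUnimodal (boundedCompCount k l)
  | 0 => IsUnimodal.of_le_of_ge 0
      (fun p hp => by rw [boundedCompCount_of_neg hp]; exact boundedCompCount_nonneg _)
      (fun p hp => by rw [boundedCompCount_zero_left (by omega)]; exact boundedCompCount_nonneg _)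
  | k + 1 => ((isUnimodal_boundedCompCount hl k).prevSum l).congr_of_ge 1
      (fun p hp => by
        rcases lt_or_eq_of_le (show p ≤ 0 by omega) with hneg | rfl
        · rw [boundedCompCount_of_neg hneg]; exact boundedCompCount_nonneg _
        · rw [boundedCompCount_zero_right, zero_add, boundedCompCount_succ one_ne_zero, prevSum]
          calc (1 : ℤ) = boundedCompCount k l (1 - (0 : ℕ) - 1) := by
                simp [boundedCompCount_zero_right]
            _ ≤ _ := single_le_sum (f := fun i : ℕ => boundedCompCount k l (1 - i - 1))
                (fun i _ => boundedCompCount_nonneg _) (mem_range.2 hl))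
      (fun p hp => boundedCompCount_succ (by omega))

end boundedCompCount

lemma compCount_eq_boundedCompCount (k l n : ℕ) :
    (compCount k l n : ℤ) = boundedCompCount k l n :=
  congrArg _ (Nat.card_congr (Equiv.subtypeEquivRight fun c => by simp only [Nat.cast_inj]))

theorem compCount_unimodal_general (k l : ℕ) (hl : 0 < l) :
    ∃ m ≤ k * l, (∀ i, i < m → compCount k l i ≤ compCount k l (i + 1)) ∧
      (∀ i, m ≤ i → i < k * l → compCount k l (i + 1) ≤ compCount k l i) := by
  refine exists_mode_le (fun m n hmn hm => ?_) (k * l)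
  have h := isUnimodal_boundedCompCount hl k (Int.ofNat_le.2 hmn)
  simp only [← Nat.cast_lt (α := ℤ), ← Nat.cast_le (α := ℤ), compCount_eq_boundedCompCount]
    at hm ⊢
  push_cast at hm ⊢
  exact h hm

theorem compCount_unimodal (k l : ℕ) (hk : 0 < k) (hl : 0 < l) :
    ∃ m ≤ k * l, (∀ i, i < m → compCount k l i ≤ compCount k l (i + 1)) ∧
      (∀ i, m ≤ i → i < k * l → compCount k l (i + 1) ≤ compCount k l i) :=
  compCount_unimodal_general k l hl
end

section
/- For every composition κ, the polynomial f^{K(κ)}(q) = Σ_{μ ≤ κ} q^{|μ|} is unimodal, where the sum is over compositions μ with componentwise μᵢ ≤ κᵢ. -/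
open Polynomial

/-- `idealCount κ n` is the number of compositions `μ ≤ κ` (componentwise,
with `μ` having at most as many parts as `κ`) whose parts sum to `n`. -/
noncomputable def idealCount (κ : List ℕ) (n : ℕ) : ℕ :=
  Nat.card {μ : List ℕ // μ.length ≤ κ.length ∧ (∀ x ∈ μ, 1 ≤ x) ∧
    (∀ i, i < μ.length → μ.getD i 0 ≤ κ.getD i 0) ∧ μ.sum = n}

/-- The generating polynomial `f^{K(κ)}(q) = ∑_{μ ≤ κ} q^{|μ|}`. -/
noncomputable def idealPoly (κ : List ℕ) : Polynomial ℝ :=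
  ∑ n ∈ Finset.range (κ.sum + 1), C (idealCount κ n : ℝ) * X ^ n

/-!
Put `a = idealCount κ` and `b = idealCount (k :: κ)`. Splitting off the first part gives
`b n = a (n - k) + ⋯ + a (n - 1)` for `n > 0`, so `b` is nondecreasing up to `k` and
`b (n + 1) - b n = a n - a (n - k)` from there on. If `a` is unimodal, then `a n < a (n - k)`
forces `a j ≤ a (j - k)` for every `j ≥ n`: once `b` strictly drops it never rises again, so `b`
is unimodal with its peak at its first descent. Induction on `κ` finishes the proof.
-/

def IsUnimodalAt {α : Type*} [Preorder α] (a : ℕ → α) (m : ℕ) : Prop :=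
  MonotoneOn a (Set.Iic m) ∧ AntitoneOn a (Set.Ici m)

theorem IsUnimodalAt.le_sub_of_lt_sub {α : Type*} [Preorder α] {a : ℕ → α} {m k n j : ℕ}
    (ha : IsUnimodalAt a m) (hlt : a n < a (n - k)) (hnj : n ≤ j) : a j ≤ a (j - k) := by
  have hmn : m < n := by
    by_contra! hnm
    exact (ha.1 (Set.mem_Iic.2 (by omega)) (Set.mem_Iic.2 hnm) (n.sub_le k)).not_gt hlt
  by_cases hmj : m ≤ j - k
  · exact ha.2 hmj (hmj.trans (j.sub_le k)) (j.sub_le k)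
  · calc a j ≤ a n := ha.2 hmn.le (hmn.le.trans hnj) hnj
      _ ≤ a (n - k) := hlt.le
      _ ≤ a (j - k) := ha.1 (Set.mem_Iic.2 (by omega)) (Set.mem_Iic.2 (by omega)) (by omega)

theorem exists_isUnimodalAt_of_descent {α : Type*} [LinearOrder α] {a : ℕ → α}
    (hdesc : ∃ n, a (n + 1) < a n)
    (hstay : ∀ n j, a (n + 1) < a n → n ≤ j → a (j + 1) ≤ a j) :
    ∃ m, IsUnimodalAt a m := by
  classical
  refine ⟨Nat.find hdesc, monotoneOn_of_le_succ Set.ordConnected_Iic fun i _ _ hi => ?_,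
    antitoneOn_nat_Ici_of_succ_le fun i hi => hstay _ i (Nat.find_spec hdesc) hi⟩
  simp only [Order.succ_eq_add_one, Set.mem_Iic] at hi ⊢
  exact not_lt.1 (Nat.find_min hdesc (by omega))

def compositionsBelow (κ : List ℕ) (n : ℕ) : Set (List ℕ) :=
  {μ | μ.length ≤ κ.length ∧ (∀ x ∈ μ, 1 ≤ x) ∧
    (∀ i, i < μ.length → μ.getD i 0 ≤ κ.getD i 0) ∧ μ.sum = n}

theorem idealCount_eq_card (κ : List ℕ) (n : ℕ) :
    idealCount κ n = Nat.card (compositionsBelow κ n) := rfl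

namespace compositionsBelow

theorem nil_mem_iff {κ : List ℕ} {n : ℕ} : [] ∈ compositionsBelow κ n ↔ n = 0 := by
  simp [compositionsBelow, eq_comm]

theorem not_mem_nil {c n : ℕ} {ν : List ℕ} : c :: ν ∉ compositionsBelow [] n := by
  simp [compositionsBelow]

theorem cons_mem_cons_iff {k c n : ℕ} {κ ν : List ℕ} :
    c :: ν ∈ compositionsBelow (k :: κ) n ↔
      1 ≤ c ∧ c ≤ k ∧ c + ν.sum = n ∧ ν ∈ compositionsBelow κ ν.sum := by
  simp only [compositionsBelow, Set.mem_ofPred_eq, List.length_cons, List.mem_cons,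
    forall_eq_or_imp, List.sum_cons, and_true, Nat.add_le_add_iff_right]
  constructor
  · rintro ⟨hlen, ⟨hc, hν⟩, hle, hsum⟩
    exact ⟨hc, by simpa using hle 0 (by simp), hsum, hlen, hν,
      fun i hi => by simpa using hle (i + 1) (by simpa using hi)⟩
  · rintro ⟨hc, hck, hsum, hlen, hν, hle⟩
    refine ⟨hlen, ⟨hc, hν⟩, fun i hi => ?_, hsum⟩
    cases i with
    | zero => simpa using hck
    | succ i => simpa using hle i (by simpa using hi)

theorem zero_eq (κ : List ℕ) : compositionsBelow κ 0 = {[]} := by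
  ext μ
  cases μ with
  | nil => simp [nil_mem_iff]
  | cons c ν =>
    simp only [Set.mem_singleton_iff, reduceCtorEq, iff_false]
    rintro ⟨-, hpos, -, hsum⟩
    have := hpos c List.mem_cons_self
    rw [List.sum_cons] at hsum
    omega

theorem sum_le {κ μ : List ℕ} {n : ℕ} (hμ : μ ∈ compositionsBelow κ n) : n ≤ κ.sum := by
  induction κ generalizing μ n with
  | nil =>
    cases μ with
    | nil => exact (nil_mem_iff.1 hμ).le
    | cons c ν => exact absurd hμ not_mem_nil
  | cons k κ ih =>
    cases μ with
    | nil => simp [nil_mem_iff.1 hμ]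
    | cons c ν =>
      obtain ⟨-, hck, hsum, hν⟩ := cons_mem_cons_iff.1 hμ
      have := ih hν
      simp only [List.sum_cons]
      omega

instance finite (κ : List ℕ) (n : ℕ) : Finite (compositionsBelow κ n) :=
  Finite.of_injective (fun μ : compositionsBelow κ n =>
      (⟨μ.1, fun hx => μ.2.2.1 _ hx, μ.2.2.2.2⟩ : Composition n))
    fun _ _ h => Subtype.ext (congrArg Composition.blocks h)

def consEquiv (k : ℕ) (κ : List ℕ) {n : ℕ} (hn : n ≠ 0) :
    compositionsBelow (k :: κ) n ≃ Σ i : Finset.Ico (n - k) n, compositionsBelow κ i where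
  toFun
    | ⟨[], hμ⟩ => absurd (nil_mem_iff.1 hμ) hn
    | ⟨c :: ν, hμ⟩ =>
      have hμ := cons_mem_cons_iff.1 hμ
      ⟨⟨ν.sum, Finset.mem_Ico.2 (by omega)⟩, ⟨ν, hμ.2.2.2⟩⟩
  invFun
    | ⟨⟨i, hi⟩, ν, hν⟩ =>
      have hsum : ν.sum = i := hν.2.2.2
      have hi := Finset.mem_Ico.1 hi
      ⟨(n - i) :: ν, cons_mem_cons_iff.2 ⟨by omega, by omega, by omega, hsum ▸ hν⟩⟩
  left_inv := by
    rintro ⟨_ | ⟨c, ν⟩, hμ⟩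
    · exact absurd (nil_mem_iff.1 hμ) hn
    · obtain ⟨-, -, hsum, -⟩ := cons_mem_cons_iff.1 hμ
      ext1
      simp only [List.cons.injEq, and_true]
      omega
  right_inv := by
    rintro ⟨⟨i, hi⟩, ν, hν⟩
    obtain rfl : ν.sum = i := hν.2.2.2
    rfl

end compositionsBelow

open compositionsBelow

theorem idealCount_zero (κ : List ℕ) : idealCount κ 0 = 1 := by
  simp [idealCount_eq_card, zero_eq]

theorem idealCount_eq_zero {κ : List ℕ} {n : ℕ} (hn : κ.sum < n) : idealCount κ n = 0 := by
  rw [idealCount_eq_card, Nat.card_eq_zero]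
  exact Or.inl ⟨fun μ => hn.not_ge (sum_le μ.2)⟩

theorem idealCount_cons (k : ℕ) (κ : List ℕ) {n : ℕ} (hn : n ≠ 0) :
    idealCount (k :: κ) n = ∑ i ∈ Finset.Ico (n - k) n, idealCount κ i := by
  rw [idealCount_eq_card, Nat.card_congr (consEquiv k κ hn), Nat.card_sigma,
    Finset.sum_coe_sort (Finset.Ico (n - k) n) (fun i => Nat.card (compositionsBelow κ i))]
  rfl

theorem coeff_idealPoly (κ : List ℕ) (n : ℕ) : (idealPoly κ).coeff n = idealCount κ n := by
  rw [idealPoly, finsetSum_coeff]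
  simp only [coeff_C_mul, coeff_X_pow, mul_ite, mul_one, mul_zero, Finset.sum_ite_eq,
    Finset.mem_range, Nat.lt_succ_iff]
  split_ifs with hn
  · rfl
  · rw [idealCount_eq_zero (not_le.1 hn), Nat.cast_zero]

theorem idealCount_cons_succ_add {k n : ℕ} (κ : List ℕ) (hkn : k ≤ n) (hn : n ≠ 0) :
    idealCount (k :: κ) (n + 1) + idealCount κ (n - k) =
      idealCount (k :: κ) n + idealCount κ n := by
  rw [idealCount_cons k κ hn, idealCount_cons k κ (Nat.add_one_ne_zero n), Nat.sub_add_comm hkn,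
    ← Finset.sum_Ico_succ_top (Nat.sub_le n k),
    Finset.sum_eq_sum_Ico_succ_bot (Nat.lt_succ_of_le (Nat.sub_le n k)), add_comm]

theorem idealCount_cons_le_succ {k n : ℕ} (κ : List ℕ) (hnk : n < k) :
    idealCount (k :: κ) n ≤ idealCount (k :: κ) (n + 1) := by
  rw [idealCount_cons k κ (Nat.add_one_ne_zero n), Nat.sub_eq_zero_of_le (by omega)]
  rcases Nat.eq_zero_or_pos n with rfl | hn
  · simp [idealCount_zero]
  · rw [idealCount_cons k κ hn.ne', Nat.sub_eq_zero_of_le hnk.le]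
    exact Finset.sum_le_sum_of_subset (Finset.Ico_subset_Ico_right n.le_succ)

theorem exists_isUnimodalAt_idealCount (κ : List ℕ) (hκ : ∀ x ∈ κ, 1 ≤ x) :
    ∃ m, IsUnimodalAt (idealCount κ) m := by
  induction κ with
  | nil =>
    refine ⟨0, by simp [MonotoneOn], antitoneOn_nat_Ici_of_succ_le fun i _ => ?_⟩
    rw [idealCount_eq_zero (by simp)]
    exact Nat.zero_le _
  | cons k κ ih =>
    obtain ⟨m, ha⟩ := ih fun x hx => hκ x (List.mem_cons_of_mem k hx)
    have hk : 1 ≤ k := hκ k List.mem_cons_self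
    apply exists_isUnimodalAt_of_descent
    · by_contra! hmono
      have h := monotone_nat_of_le_succ hmono (Nat.zero_le ((k :: κ).sum + 1))
      rw [idealCount_zero, idealCount_eq_zero (Nat.lt_succ_self _)] at h
      omega
    · intro n j hdesc hnj
      have hkn : k ≤ n := by
        by_contra! hnk
        exact (idealCount_cons_le_succ κ hnk).not_gt hdesc
      have hdrop : idealCount κ n < idealCount κ (n - k) := by
        have := idealCount_cons_succ_add κ hkn (by omega)
        omega
      have hcross := ha.le_sub_of_lt_sub hdrop hnj
      have := idealCount_cons_succ_add κ (hkn.trans hnj) (by omega)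
      omega

theorem idealPoly_unimodal (κ : List ℕ) (hκ : ∀ x ∈ κ, 1 ≤ x) :
    PolyUnimodal (idealPoly κ) := by
  obtain ⟨m, hmono, hanti⟩ := exists_isUnimodalAt_idealCount κ hκ
  refine ⟨m, fun i hi => ?_, fun i hi => ?_⟩ <;> simp only [coeff_idealPoly, Nat.cast_le]
  · exact hmono (Set.mem_Iic.2 hi.le) (Set.mem_Iic.2 hi) i.le_succ
  · exact hanti (Set.mem_Ici.2 hi) (Set.mem_Ici.2 (hi.trans i.le_succ)) i.le_succ
end

section
/- Let P be a finite graded poset with ranks P₀, P₁, ..., P_r. If P admits a modal chain decomposition (a partition of P into saturated chains each of which contains an element of some fixed rank P_m), then the rank sequence |P₀|, |P₁|, ..., |P_r| is unimodal. -/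
/-!
Send each element `x` of rank `n` to the element of rank `n + 1` (below the modal rank) or
`n - 1` (above it) on the chain through `x`. A saturated chain runs through consecutive ranks, so
it has at most one element of each rank and it contains every rank between two of its own; as it
also meets the modal rank, the target exists. Since the chains are disjoint, this map is
injective between rank levels, which gives the inequalities.
-/

namespace List

variable {α : Type*} {f : α → ℕ}

theorem map_eq_range'_of_isChain_succ :
    ∀ {a : α} {l : List α}, (a :: l).IsChain (fun x y => f y = f x + 1) →
      (a :: l).map f = range' (f a) (l.length + 1)
  | _, [], _ => rfl
  | a, b :: l, h => by
    rw [isChain_cons_cons] at h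
    rw [map_cons, map_eq_range'_of_isChain_succ h.2, h.1, range'_succ]
    rfl

theorem nodup_map_of_isChain_succ {l : List α} (h : l.IsChain (fun x y => f y = f x + 1)) :
    (l.map f).Nodup := by
  cases l with
  | nil => exact nodup_nil
  | cons a l => exact map_eq_range'_of_isChain_succ h ▸ nodup_range' 1

theorem exists_mem_eq_of_isChain_succ {l : List α} (h : l.IsChain (fun x y => f y = f x + 1))
    {x y : α} (hx : x ∈ l) (hy : y ∈ l) {n : ℕ} (hxn : f x ≤ n) (hny : n ≤ f y) :
    ∃ z ∈ l, f z = n := by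
  cases l with
  | nil => simp at hx
  | cons a l =>
    have hrange := map_eq_range'_of_isChain_succ h
    have hfx := hrange ▸ mem_map_of_mem (f := f) hx
    have hfy := hrange ▸ mem_map_of_mem (f := f) hy
    rw [mem_range'_1] at hfx hfy
    have hn : n ∈ (a :: l).map f := hrange ▸ mem_range'_1.2 ⟨by omega, by omega⟩
    exact mem_map.1 hn

end List

theorem Nat.card_le_card_of_partition {P ι : Type*} [Finite P] {C : ι → Set P}
    (hpart : ∀ x, ∃! i, x ∈ C i) {p q : P → Prop}
    (hp : ∀ i, {x ∈ C i | p x}.Subsingleton)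
    (hpq : ∀ i, (∃ x ∈ C i, p x) → ∃ y ∈ C i, q y) :
    Nat.card {x // p x} ≤ Nat.card {x // q x} := by
  choose block mem_block block_unique using hpart
  choose g hg_mem hg using fun x : {x // p x} => hpq (block x) ⟨x, mem_block x, x.2⟩
  refine Nat.card_le_card_of_injective (fun x => ⟨g x, hg x⟩) fun x₁ x₂ h => ?_
  have hgx : g x₁ = g x₂ := congrArg Subtype.val h
  have hblock : block x₁ = block x₂ :=
    (block_unique _ _ (hg_mem x₁)).trans (block_unique _ _ (hgx ▸ hg_mem x₂)).symm
  exact Subtype.ext (hp _ ⟨mem_block x₁, x₁.2⟩ ⟨hblock ▸ mem_block x₂, x₂.2⟩)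

theorem modal_chain_decomposition_implies_rank_unimodal_general
    {P : Type*} [PartialOrder P] [Fintype P] (r : ℕ) (rk : P → ℕ)
    -- P is graded: covers raise rank by one, with a bottom of rank 0
    -- and a top of rank r
    (hcov : ∀ x y : P, x ⋖ y → rk y = rk x + 1)
    -- a chain decomposition into saturated chains
    {ι : Type*} (C : ι → List P)
    (hchain : ∀ i, (C i).Chain' (· ⋖ ·))
    (hpart : ∀ x : P, ∃! i, x ∈ C i)
    -- the decomposition is modal: every chain meets rank m
    (m : ℕ) (hmodal : ∀ i, ∃ x ∈ C i, rk x = m) :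
    ∃ M ≤ r, (∀ n, n < M → Nat.card {x : P // rk x = n} ≤ Nat.card {x : P // rk x = n + 1}) ∧
      (∀ n, M ≤ n → n < r → Nat.card {x : P // rk x = n + 1} ≤ Nat.card {x : P // rk x = n}) := by
  have hrank (i : ι) : (C i).IsChain (fun x y => rk y = rk x + 1) :=
    (hchain i).imp fun _ _ => hcov _ _
  have hlevel (n : ℕ) (i : ι) : {x | x ∈ C i ∧ rk x = n}.Subsingleton :=
    fun _ ⟨hx, hxn⟩ _ ⟨hy, hyn⟩ =>
      List.inj_on_of_nodup_map (List.nodup_map_of_isChain_succ (hrank i)) hx hy (hxn.trans hyn.symm)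
  refine ⟨min m r, min_le_right m r, fun n hn => ?_, fun n hn hnr => ?_⟩
  · refine Nat.card_le_card_of_partition hpart (hlevel n) fun i ⟨x, hx, hxn⟩ => ?_
    obtain ⟨z, hz, hzm⟩ := hmodal i
    exact List.exists_mem_eq_of_isChain_succ (hrank i) hx hz (by omega) (by omega)
  · refine Nat.card_le_card_of_partition hpart (hlevel (n + 1)) fun i ⟨x, hx, hxn⟩ => ?_
    obtain ⟨z, hz, hzm⟩ := hmodal i
    exact List.exists_mem_eq_of_isChain_succ (hrank i) hz hx (by omega) (by omega)

theorem modal_chain_decomposition_implies_rank_unimodal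
    {P : Type*} [PartialOrder P] [Fintype P] (r : ℕ) (rk : P → ℕ)
    -- P is graded: covers raise rank by one, with a bottom of rank 0
    -- and a top of rank r
    (hcov : ∀ x y : P, x ⋖ y → rk y = rk x + 1)
    (hbot : ∃ x : P, IsBot x ∧ rk x = 0)
    (htop : ∃ x : P, IsTop x ∧ rk x = r)
    (hle : ∀ x : P, rk x ≤ r)
    -- a chain decomposition into saturated chains
    {ι : Type*} [Fintype ι] (C : ι → List P)
    (hchain : ∀ i, (C i).Chain' (· ⋖ ·))
    (hne : ∀ i, C i ≠ [])
    (hpart : ∀ x : P, ∃! i, x ∈ C i)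
    -- the decomposition is modal: every chain meets rank m
    (m : ℕ) (hmodal : ∀ i, ∃ x ∈ C i, rk x = m) :
    ∃ M ≤ r, (∀ n, n < M → Nat.card {x : P // rk x = n} ≤ Nat.card {x : P // rk x = n + 1}) ∧
      (∀ n, M ≤ n → n < r → Nat.card {x : P // rk x = n + 1} ≤ Nat.card {x : P // rk x = n}) :=
  modal_chain_decomposition_implies_rank_unimodal_general r rk hcov C hchain hpart m hmodal
end
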